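/- arXiv:0806.4946 — 2 statements merged into one kernel-verified Lean document; each statement's English description precedes it below -/
import Mathlib

section
/- For any residuated lattice A, the set A^◇ = {(a,b) ∈ A × A : a ≤ b} with operations (a₁,b₁)∧(a₂,b₂) = (a₁∧a₂, b₁∧b₂), (a₁,b₁)∨(a₂,b₂) = (a₁∨a₂, b₁∨b₂), (a₁,b₁)⊙(a₂,b₂) = (a₁⊙a₂, (a₁⊙b₂)∨(a₂⊙b₁)), (a₁,b₁)→(a₂,b₂) = ((a₁→a₂)∧(b₁→b₂), a₁→b₂), with bottom (0,0) and top (1,1), is a residuated lattice, and the diagonal map a ↦ (a,a) is an embedding. -/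
class ResLat (A : Type*) extends Lattice A, CommMonoid A where
  rbot : A
  himp : A → A → A
  rbot_le : ∀ a : A, rbot ≤ a
  le_one : ∀ a : A, a ≤ 1
  resid : ∀ a b c : A, a * b ≤ c ↔ a ≤ himp b c

namespace ResLat

variable {A : Type*} [ResLat A]

def rneg (a : A) : A := himp a rbot

def Nilpotent (a : A) : Prop := ∃ n : ℕ, 1 ≤ n ∧ a ^ n = rbot

def Unity (a : A) : Prop := ∀ n : ℕ, 1 ≤ n → Nilpotent (rneg (a ^ n))

def ImpFilter (F : Set A) : Prop :=
  (1 : A) ∈ F ∧ ∀ x y : A, x ∈ F → himp x y ∈ F → y ∈ F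

def MaxImpFilter (F : Set A) : Prop :=
  ImpFilter F ∧ F ≠ Set.univ ∧
    ∀ G : Set A, ImpFilter G → F ⊆ G → G = F ∨ G = Set.univ

def Rad (A : Type*) [ResLat A] : Set A :=
  { x | ∀ F : Set A, MaxImpFilter F → x ∈ F }

def Ds (A : Type*) [ResLat A] : Set A := { x | rneg x = rbot }

def Simple (A : Type*) [ResLat A] : Prop :=
  Nontrivial A ∧ ∀ F : Set A, ImpFilter F → F = {1} ∨ F = Set.univ

def IsHom {B : Type*} [ResLat B] (f : A → B) : Prop :=
  (∀ x y : A, f (x * y) = f x * f y) ∧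
  (∀ x y : A, f (himp x y) = himp (f x) (f y)) ∧
  (∀ x y : A, f (x ⊓ y) = f x ⊓ f y) ∧
  (∀ x y : A, f (x ⊔ y) = f x ⊔ f y) ∧
  f rbot = rbot ∧ f 1 = 1

end ResLat

open ResLat

abbrev Diam (A : Type*) [ResLat A] : Type _ := {p : A × A // p.1 ≤ p.2}

section Aux
variable {A : Type*} [ResLat A]

lemma rl_mul_le_mul_right {a b : A} (c : A) (h : a ≤ b) : a * c ≤ b * c :=
  (resid a c (b * c)).mpr (h.trans ((resid b c (b * c)).mp le_rfl))

lemma rl_mul_le_mul {a b c d : A} (h1 : a ≤ b) (h2 : c ≤ d) : a * c ≤ b * d := by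
  calc a * c ≤ b * c := rl_mul_le_mul_right c h1
    _ = c * b := mul_comm _ _
    _ ≤ d * b := rl_mul_le_mul_right b h2
    _ = b * d := mul_comm _ _

lemma rl_himp_mono {a b c : A} (h : b ≤ c) : himp a b ≤ himp a c :=
  (resid _ _ _).mp (((resid (himp a b) a b).mpr le_rfl).trans h)

lemma rl_mul_sup (a b c : A) : a * (b ⊔ c) = a * b ⊔ a * c := by
  apply le_antisymm
  · rw [mul_comm, resid]
    refine sup_le ((resid _ _ _).mp ?_) ((resid _ _ _).mp ?_)
    · exact le_trans (le_of_eq (mul_comm b a)) le_sup_left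
    · exact le_trans (le_of_eq (mul_comm c a)) le_sup_right
  · exact sup_le (rl_mul_le_mul le_rfl le_sup_left) (rl_mul_le_mul le_rfl le_sup_right)

def diamLattice : Lattice (Diam A) :=
  Subtype.lattice (fun _ _ hx hy => sup_le_sup hx hy) (fun _ _ hx hy => inf_le_inf hx hy)

def diamCommMonoid : CommMonoid (Diam A) where
  mul p q := ⟨(p.val.1 * q.val.1, (p.val.1 * q.val.2) ⊔ (q.val.1 * p.val.2)),
    le_trans (rl_mul_le_mul le_rfl q.2) le_sup_left⟩
  one := ⟨(1, 1), le_rfl⟩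
  mul_assoc p q r := by
    apply Subtype.ext
    apply Prod.ext
    · exact mul_assoc _ _ _
    · show p.val.1 * q.val.1 * r.val.2 ⊔ r.val.1 * (p.val.1 * q.val.2 ⊔ q.val.1 * p.val.2)
        = p.val.1 * (q.val.1 * r.val.2 ⊔ r.val.1 * q.val.2) ⊔ q.val.1 * r.val.1 * p.val.2
      simp only [rl_mul_sup, mul_assoc, mul_left_comm, mul_comm]
      rw [← sup_assoc, sup_comm]
  mul_comm p q := by
    apply Subtype.ext
    apply Prod.ext
    · exact mul_comm _ _
    · exact sup_comm _ _
  one_mul p := by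
    apply Subtype.ext
    apply Prod.ext
    · exact one_mul _
    · show 1 * p.val.2 ⊔ p.val.1 * 1 = p.val.2
      rw [one_mul, mul_one]
      exact sup_eq_left.mpr p.2
  mul_one p := by
    apply Subtype.ext
    apply Prod.ext
    · exact mul_one _
    · show p.val.1 * 1 ⊔ 1 * p.val.2 = p.val.2
      rw [one_mul, mul_one]
      exact sup_eq_right.mpr p.2

def diamResLat : ResLat (Diam A) :=
  letI : Lattice (Diam A) := diamLattice
  letI : CommMonoid (Diam A) := diamCommMonoid
  { rbot := ⟨(rbot, rbot), le_rfl⟩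
    himp := fun p q => ⟨(himp p.val.1 q.val.1 ⊓ himp p.val.2 q.val.2, himp p.val.1 q.val.2),
      inf_le_left.trans (rl_himp_mono q.2)⟩
    rbot_le := fun p => Subtype.coe_le_coe.mp (Prod.le_def.mpr ⟨rbot_le _, rbot_le _⟩)
    le_one := fun p => Subtype.coe_le_coe.mp (Prod.le_def.mpr ⟨le_one _, le_one _⟩)
    resid := fun p q r => by
      show (p.val.1 * q.val.1, p.val.1 * q.val.2 ⊔ q.val.1 * p.val.2) ≤ r.val ↔
        p.val ≤ (himp q.val.1 r.val.1 ⊓ himp q.val.2 r.val.2, himp q.val.1 r.val.2)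
      rw [Prod.le_def, Prod.le_def, sup_le_iff, le_inf_iff]
      constructor
      · rintro ⟨h1, h2, h3⟩
        rw [mul_comm] at h3
        exact ⟨⟨(resid _ _ _).mp h1, (resid _ _ _).mp h2⟩, (resid _ _ _).mp h3⟩
      · rintro ⟨⟨h1, h2⟩, h3⟩
        refine ⟨(resid _ _ _).mpr h1, (resid _ _ _).mpr h2, ?_⟩
        rw [mul_comm]
        exact (resid _ _ _).mpr h3 }

end Aux

theorem stmt8 (A : Type*) [ResLat A] :
    ∃ L : ResLat (Diam A),
      (∀ p q : Diam A,
        ((letI := L; p * q) : Diam A).val =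
          (p.val.1 * q.val.1, (p.val.1 * q.val.2) ⊔ (q.val.1 * p.val.2))) ∧
      (∀ p q : Diam A,
        (L.himp p q).val =
          (himp p.val.1 q.val.1 ⊓ himp p.val.2 q.val.2, himp p.val.1 q.val.2)) ∧
      (∀ p q : Diam A,
        ((letI := L; p ⊓ q) : Diam A).val = (p.val.1 ⊓ q.val.1, p.val.2 ⊓ q.val.2)) ∧
      (∀ p q : Diam A,
        ((letI := L; p ⊔ q) : Diam A).val = (p.val.1 ⊔ q.val.1, p.val.2 ⊔ q.val.2)) ∧
      (L.rbot.val = ((rbot : A), (rbot : A))) ∧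
      (((letI := L; 1) : Diam A).val = (1, 1)) ∧
      (letI := L; IsHom (fun a : A => (⟨(a, a), le_refl a⟩ : Diam A))) ∧
      Function.Injective (fun a : A => (⟨(a, a), le_refl a⟩ : Diam A)) := by
  refine ⟨diamResLat, fun p q => rfl, fun p q => rfl, fun p q => rfl, fun p q => rfl,
    rfl, rfl, ?_, ?_⟩
  · refine ⟨fun x y => ?_, fun x y => ?_, fun x y => ?_, fun x y => ?_, rfl, rfl⟩
    · apply Subtype.ext
      apply Prod.ext
      · rfl
      · show x * y = x * y ⊔ y * x
        rw [mul_comm y x, sup_idem]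
    · apply Subtype.ext
      apply Prod.ext
      · exact (inf_idem _).symm
      · rfl
    · rfl
    · rfl
  · intro a b h
    exact congrArg (fun p : Diam A => p.val.1) h
end

section
/- In an SRL-algebra, every unity is dense: if ¬(aⁿ) is nilpotent for all n, then ¬a = 0. Hence Rad(A) = Ds(A) for every residuated lattice satisfying x ∧ ¬x = 0. -/
namespace ResLat

variable {A : Type*} [ResLat A]

lemma himp_mul_le (a b : A) : himp a b * a ≤ b := (resid _ _ _).mpr le_rfl

lemma mul_le_mul_right'' {b c : A} (h : b ≤ c) (a : A) : b * a ≤ c * a := by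
  have h1 : c ≤ himp a (c * a) := (resid _ _ _).mp (by rw [mul_comm])
  exact (resid _ _ _).mpr (le_trans h h1)

lemma mul_le_mul_left'' {b c : A} (h : b ≤ c) (a : A) : a * b ≤ a * c := by
  rw [mul_comm a b, mul_comm a c]; exact mul_le_mul_right'' h a

lemma mul_le_mul'' {a b c d : A} (h1 : a ≤ b) (h2 : c ≤ d) : a * c ≤ b * d :=
  le_trans (mul_le_mul_right'' h1 c) (mul_le_mul_left'' h2 b)

lemma mul_le_left' (a b : A) : a * b ≤ a := by
  have := mul_le_mul_left'' (le_one b) a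
  rwa [mul_one] at this

lemma himp_one_left (z : A) : himp (1 : A) z = z := by
  apply le_antisymm
  · have := himp_mul_le (1 : A) z; rwa [mul_one] at this
  · exact (resid _ _ _).mp (by rw [mul_one])

lemma himp_self_eq_one (a : A) : himp a a = 1 := by
  apply le_antisymm (le_one _)
  exact (resid _ _ _).mp (by rw [one_mul])

lemma himp_eq_one_of_le {a b : A} (h : a ≤ b) : himp a b = 1 := by
  apply le_antisymm (le_one _)
  exact (resid _ _ _).mp (by rw [one_mul]; exact h)

lemma pow_le_pow'' (a : A) {m n : ℕ} (h : m ≤ n) : a ^ n ≤ a ^ m := by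
  obtain ⟨d, rfl⟩ := Nat.exists_eq_add_of_le h
  rw [pow_add]
  exact mul_le_left' _ _

lemma eq_rbot_of_sq_le {a : A} (hS : ∀ x : A, x ⊓ rneg x = rbot)
    (h : a * a ≤ rbot) : a = rbot := by
  have h1 : a ≤ rneg a := (resid _ _ _).mp h
  have h2 : a ≤ a ⊓ rneg a := le_inf le_rfl h1
  rw [hS] at h2
  exact le_antisymm h2 (rbot_le a)

lemma eq_rbot_of_nilpotent {a : A} (hS : ∀ x : A, x ⊓ rneg x = rbot)
    (h : Nilpotent a) : a = rbot := by
  obtain ⟨n, hn, hpow⟩ := h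
  induction n using Nat.strong_induction_on generalizing a with
  | _ n ih =>
    rcases Nat.lt_or_ge n 2 with h2 | h2
    · interval_cases n
      · rwa [pow_one] at hpow
    · set m := (n + 1) / 2 with hm
      have hm1 : 1 ≤ m := Nat.le_div_iff_mul_le (by norm_num) |>.mpr (by omega)
      have hmn : m < n := by omega
      have h2m : n ≤ 2 * m := by omega
      have hsq : a ^ m * a ^ m ≤ rbot := by
        rw [← pow_add]
        calc a ^ (m + m) ≤ a ^ n := pow_le_pow'' a (by omega)
        _ = rbot := hpow
      have ham : a ^ m = rbot := eq_rbot_of_sq_le hS hsq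
      have : Nilpotent a := ⟨m, hm1, ham⟩
      obtain ⟨k, hk, hpk⟩ := this
      exact ih m hmn hm1 ham

lemma mem_of_le_of_mem {F : Set A} (hF : ImpFilter F) {a b : A}
    (ha : a ∈ F) (hab : a ≤ b) : b ∈ F := by
  refine hF.2 a b ha ?_
  rw [himp_eq_one_of_le hab]
  exact hF.1

lemma mul_mem_of_mem {F : Set A} (hF : ImpFilter F) {a b : A}
    (ha : a ∈ F) (hb : b ∈ F) : a * b ∈ F := by
  refine hF.2 a (a * b) ha ?_
  have hle : b ≤ himp a (a * b) := (resid _ _ _).mp (by rw [mul_comm])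
  exact mem_of_le_of_mem hF hb hle

lemma eq_univ_of_rbot_mem {F : Set A} (hF : ImpFilter F) (h : rbot ∈ F) :
    F = Set.univ :=
  Set.eq_univ_of_forall fun a => mem_of_le_of_mem hF h (rbot_le a)

lemma rneg_pow_eq_rbot {x : A} (hx : rneg x = rbot) (n : ℕ) :
    rneg (x ^ n) = rbot := by
  induction n with
  | zero => rw [pow_zero]; exact le_antisymm (by
      have := himp_mul_le (1 : A) (rbot : A)
      show himp 1 rbot ≤ rbot
      rwa [mul_one] at this) (rbot_le _)
  | succ n ih =>
    apply le_antisymm _ (rbot_le _)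
    have h1 : rneg (x ^ (n+1)) * x ^ n * x ≤ rbot := by
      rw [mul_assoc, ← pow_succ]; exact himp_mul_le _ _
    have h2 : rneg (x ^ (n+1)) * x ^ n ≤ rneg x := (resid _ _ _).mp h1
    rw [hx] at h2
    have h3 : rneg (x ^ (n+1)) * x ^ n ≤ rbot := h2
    have h4 : rneg (x ^ (n+1)) ≤ rneg (x ^ n) := (resid _ _ _).mp h3
    rwa [ih] at h4

end ResLat
open ResLat
theorem stmt13 {A : Type*} [ResLat A] (hS : ∀ x : A, x ⊓ rneg x = rbot) :
    (∀ a : A, Unity a → rneg a = rbot) ∧ Rad A = Ds A := by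
  have part1 : ∀ a : A, Unity a → rneg a = rbot := by
    intro a ha
    have := ha 1 le_rfl
    rw [pow_one] at this
    exact eq_rbot_of_nilpotent hS this
  refine ⟨part1, ?_⟩
  apply Set.eq_of_subset_of_subset
  · -- Rad ⊆ Ds
    intro x hx
    by_contra hne
    have hne' : rneg x ≠ rbot := hne
    -- filter generated by rneg x
    set b := rneg x with hb
    set D : Set A := {z | ∃ k : ℕ, b ^ k ≤ z} with hD
    have hDfil : ImpFilter D := by
      constructor
      · exact ⟨0, by rw [pow_zero]⟩
      · rintro z w ⟨j, hj⟩ ⟨k, hk⟩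
        refine ⟨k + j, ?_⟩
        rw [pow_add]
        calc b ^ k * b ^ j ≤ himp z w * z := mul_le_mul'' hk hj
        _ ≤ w := himp_mul_le _ _
    have hDbot : rbot ∉ D := by
      rintro ⟨k, hk⟩
      apply hne'
      apply eq_rbot_of_nilpotent hS
      refine ⟨k + 1, by omega, ?_⟩
      apply le_antisymm _ (rbot_le _)
      rw [pow_succ]
      calc b ^ k * b ≤ rbot * b := mul_le_mul_right'' hk b
      _ ≤ rbot := mul_le_left' _ _
    -- Zorn
    set S : Set (Set A) := {F | ImpFilter F ∧ D ⊆ F ∧ rbot ∉ F} with hSdef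
    have hzorn : ∃ M, D ⊆ M ∧ Maximal (· ∈ S) M := by
      apply zorn_subset_nonempty
      · intro c hc hchain hcne
        refine ⟨⋃₀ c, ⟨⟨?_, ?_⟩, ?_, ?_⟩, fun s hs => Set.subset_sUnion_of_mem hs⟩
        · obtain ⟨F, hF⟩ := hcne
          exact ⟨F, hF, (hc hF).1.1⟩
        · rintro z w ⟨F, hF, hzF⟩ ⟨G, hG, hwG⟩
          rcases hchain.total hF hG with h | h
          · exact ⟨G, hG, (hc hG).1.2 z w (h hzF) hwG⟩
          · exact ⟨F, hF, (hc hF).1.2 z w hzF (h hwG)⟩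
        · obtain ⟨F, hF⟩ := hcne
          exact fun z hz => ⟨F, hF, (hc hF).2.1 hz⟩
        · rintro ⟨F, hF, hbotF⟩
          exact (hc hF).2.2 hbotF
      · exact ⟨hDfil, le_rfl, hDbot⟩
    obtain ⟨M, hDM, hMmax⟩ := hzorn
    obtain ⟨hMfil, hDM', hMbot⟩ := hMmax.1
    have hMmaxfil : MaxImpFilter M := by
      refine ⟨hMfil, ?_, ?_⟩
      · intro h; rw [h] at hMbot; exact hMbot (Set.mem_univ _)
      · intro G hG hMG
        by_cases hbG : rbot ∈ G
        · exact Or.inr (eq_univ_of_rbot_mem hG hbG)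
        · left
          exact Set.eq_of_subset_of_subset
            (hMmax.2 ⟨hG, hDM.trans hMG, hbG⟩ hMG) hMG
    have hxM : x ∈ M := hx M hMmaxfil
    have hbM : b ∈ M := hDM ⟨1, by rw [pow_one]⟩
    have : rbot ∈ M := hMfil.2 x rbot hxM hbM
    exact hMbot this
  · -- Ds ⊆ Rad
    intro x hx
    intro F hF
    obtain ⟨hFfil, hFne, hFmax⟩ := hF
    set G : Set A := {z | ∃ n : ℕ, himp (x ^ n) z ∈ F} with hG
    have hGfil : ImpFilter G := by
      constructor
      · exact ⟨0, by rw [pow_zero, himp_one_left]; exact hFfil.1⟩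
      · rintro z w ⟨n, hn⟩ ⟨m, hm⟩
        refine ⟨n + m, ?_⟩
        have hmem : himp (x ^ n) z * himp (x ^ m) (himp z w) ∈ F :=
          mul_mem_of_mem hFfil hn hm
        refine mem_of_le_of_mem hFfil hmem ?_
        apply (resid _ _ _).mp
        rw [pow_add]
        calc himp (x ^ n) z * himp (x ^ m) (himp z w) * (x ^ n * x ^ m)
            = (himp (x ^ n) z * x ^ n) * (himp (x ^ m) (himp z w) * x ^ m) :=
              mul_mul_mul_comm _ _ _ _
        _ ≤ z * himp z w := mul_le_mul'' (himp_mul_le _ _) (himp_mul_le _ _)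
        _ = himp z w * z := mul_comm _ _
        _ ≤ w := himp_mul_le _ _
    have hFG : F ⊆ G := fun z hz => ⟨0, by rw [pow_zero, himp_one_left]; exact hz⟩
    have hxG : x ∈ G := ⟨1, by rw [pow_one, himp_self_eq_one]; exact hFfil.1⟩
    rcases hFmax G hGfil hFG with h | h
    · rw [← h]; exact hxG
    · exfalso
      have : rbot ∈ G := h ▸ Set.mem_univ _
      obtain ⟨n, hn⟩ := this
      have heq : himp (x ^ n) rbot = rbot := rneg_pow_eq_rbot hx n
      rw [heq] at hn
      exact hFne (eq_univ_of_rbot_mem hFfil hn)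
end
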